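/- Let t₄ = √(2+√2). For t ∈ ℝ let G_{ij}(t) = u_i(t)·v_j(t) − u_j(t)·v_i(t) for 1 ≤ i < j ≤ 8, where u(t) = (−t, 0, t, 2+√2, (1+√2)t, 1+√2, (1+√2)t, 2+√2) and v(t) = (0, 1, t, 1+√2, √2·t, 1+√2, t, 1). Then for all integers a, b, c and all 1 ≤ i < j < k ≤ 8: if a·G_{jk}(t₄) − b·G_{ik}(t₄) + c·G_{ij}(t₄) = 0, then a·G_{jk}(t) − b·G_{ik}(t) + c·G_{ij}(t) = 0 for every real t ≠ 0. -/

import Mathlib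

/-- `u t`, the first basis vector of the plane `E_t` (16-fold family). -/
noncomputable def u16 (t : ℝ) : Fin 8 → ℝ :=
  ![-t, 0, t, 2 + Real.sqrt 2, (1 + Real.sqrt 2) * t, 1 + Real.sqrt 2,
    (1 + Real.sqrt 2) * t, 2 + Real.sqrt 2]

/-- `v t`, the second basis vector of the plane `E_t` (16-fold family). -/
noncomputable def v16 (t : ℝ) : Fin 8 → ℝ :=
  ![0, 1, t, 1 + Real.sqrt 2, Real.sqrt 2 * t, 1 + Real.sqrt 2, t, 1]

/-- Grassmann coordinates of `E_t`. -/
noncomputable def G16 (t : ℝ) (i j : Fin 8) : ℝ := u16 t i * v16 t j - u16 t j * v16 t i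

/-!
Every coordinate of `u(t)` and `v(t)` is an element of `ℤ[√2]` times `t ^ dᵢ` with `dᵢ ∈ {0, 1}`,
so `G_{ij}(t) = γ_{ij} t ^ (dᵢ + dⱼ)` with `γ_{ij} ∈ ℤ[√2]`. Multiplying a subperiod relation by `t`
turns it into `t ^ (dᵢ + dⱼ + dₖ) * (P + Q t)` with `P, Q ∈ ℤ[√2]`. Since `t₄² = 2 + √2` has norm `2`,
which is not a square, `t₄ ∉ ℚ(√2)`; so vanishing at `t₄` forces `P = Q = 0`.
-/

theorem Int.two_ne_mul_self (n : ℤ) : 2 ≠ n * n := by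
  intro h
  have h1 : n ≤ 1 := by nlinarith
  have h2 : -1 ≤ n := by nlinarith
  interval_cases n <;> omega

namespace Zsqrtd

theorem eq_zero_of_sq_eq_mul_sq {d : ℤ} (hd : ∀ n : ℤ, d ≠ n * n) {x y δ : ℤ√d}
    (hδ : δ.norm = d) (h : x ^ 2 = δ * y ^ 2) : y = 0 := by
  have hnorm : x.norm * x.norm - d * y.norm * y.norm = 0 := by
    have := congrArg norm h
    simp only [sq, norm_mul, hδ] at this
    linear_combination this
  have : (⟨x.norm, y.norm⟩ : ℤ√d) = 0 := (norm_eq_zero hd _).mp hnorm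
  exact (norm_eq_zero hd y).mp (congrArg im this)

end Zsqrtd

local notation "φ" => Zsqrtd.toReal (d := 2) zero_le_two

theorem eq_zero_of_toReal_add_mul_sqrt_two_add_sqrt_two {x y : ℤ√2}
    (h : φ x + φ y * √(2 + √2) = 0) : x = 0 ∧ y = 0 := by
  have hinj := Zsqrtd.toReal_injective zero_le_two Int.two_ne_mul_self
  have hδ : φ ⟨2, 1⟩ = √(2 + √2) ^ 2 := by
    rw [Real.sq_sqrt (by positivity)]
    simp
  have hsq : x ^ 2 = ⟨2, 1⟩ * y ^ 2 := by
    apply hinj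
    simp only [map_pow, map_mul, hδ]
    linear_combination (φ x - φ y * √(2 + √2)) * h
  obtain rfl : y = 0 := Zsqrtd.eq_zero_of_sq_eq_mul_sq Int.two_ne_mul_self (by decide) hsq
  refine ⟨hinj ?_, rfl⟩
  simpa using h

theorem subperiod_persists_of_monomial {ι : Type*} (G : ℝ → ι → ι → ℝ) (γ : ι → ι → ℤ√2)
    (d : ι → ℕ) (hG : ∀ t i j, G t i j = φ (γ i j) * t ^ (d i + d j)) (hd : ∀ i, d i ≤ 1)
    (a b c : ℤ) (i j k : ι)
    (h : a * G (√(2 + √2)) j k - b * G (√(2 + √2)) i k + c * G (√(2 + √2)) i j = 0)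
    {t : ℝ} (ht : t ≠ 0) : a * G t j k - b * G t i k + c * G t i j = 0 := by
  set P : ℤ√2 := a * γ j k * d i - b * γ i k * d j + c * γ i j * d k
  set Q : ℤ√2 :=
    a * γ j k * (1 - d i : ℕ) - b * γ i k * (1 - d j : ℕ) + c * γ i j * (1 - d k : ℕ)
  have mul_relation_eq : ∀ s : ℝ, s * (a * G s j k - b * G s i k + c * G s i j) =
      s ^ (d i + d j + d k) * (φ P + φ Q * s) := by
    -- `s * s ^ (d j + d k) = s ^ (d i + d j + d k) * s ^ (1 - d i)` and `s ^ (1 - e) = e + (1 - e) s`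
    intro s
    simp only [hG, P, Q, map_add, map_sub, map_mul, map_intCast, map_natCast]
    rcases Nat.le_one_iff_eq_zero_or_eq_one.mp (hd i) with hi | hi <;>
    rcases Nat.le_one_iff_eq_zero_or_eq_one.mp (hd j) with hj | hj <;>
    rcases Nat.le_one_iff_eq_zero_or_eq_one.mp (hd k) with hk | hk <;>
    · simp only [hi, hj, hk]
      push_cast
      ring
  have hT : √(2 + √2) ≠ 0 := by positivity
  obtain ⟨hP, hQ⟩ : P = 0 ∧ Q = 0 := by
    apply eq_zero_of_toReal_add_mul_sqrt_two_add_sqrt_two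
    simpa [h, hT] using (mul_relation_eq (√(2 + √2))).symm
  simpa [hP, hQ, ht] using mul_relation_eq t

def u16Coeff : Fin 8 → ℤ√2 := ![-1, 0, 1, ⟨2, 1⟩, ⟨1, 1⟩, ⟨1, 1⟩, ⟨1, 1⟩, ⟨2, 1⟩]

def v16Coeff : Fin 8 → ℤ√2 := ![0, 1, 1, ⟨1, 1⟩, ⟨0, 1⟩, ⟨1, 1⟩, 1, 1]

def deg16 : Fin 8 → ℕ := ![1, 0, 1, 0, 1, 0, 1, 0]

theorem u16_eq (t : ℝ) (i : Fin 8) : u16 t i = φ (u16Coeff i) * t ^ deg16 i := by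
  fin_cases i <;> simp [u16, u16Coeff, deg16]

theorem v16_eq (t : ℝ) (i : Fin 8) : v16 t i = φ (v16Coeff i) * t ^ deg16 i := by
  fin_cases i <;> simp [v16, v16Coeff, deg16]

theorem G16_eq (t : ℝ) (i j : Fin 8) :
    G16 t i j =
      φ (u16Coeff i * v16Coeff j - u16Coeff j * v16Coeff i) * t ^ (deg16 i + deg16 j) := by
  simp only [G16, u16_eq, v16_eq, map_sub, map_mul]
  ring

theorem deg16_le_one (i : Fin 8) : deg16 i ≤ 1 := by
  fin_cases i <;> decide

theorem stmt_18_general (a b c : ℤ) (i j k : Fin 8)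
    (h : (a : ℝ) * G16 (Real.sqrt (2 + Real.sqrt 2)) j k
        - (b : ℝ) * G16 (Real.sqrt (2 + Real.sqrt 2)) i k
        + (c : ℝ) * G16 (Real.sqrt (2 + Real.sqrt 2)) i j = 0) :
    ∀ t : ℝ, t ≠ 0 → (a : ℝ) * G16 t j k - (b : ℝ) * G16 t i k + (c : ℝ) * G16 t i j = 0 :=
  fun _ ht => subperiod_persists_of_monomial G16 _ deg16 G16_eq deg16_le_one a b c i j k h ht

theorem stmt_18 (a b c : ℤ) (i j k : Fin 8) (hij : i < j) (hjk : j < k)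
    (h : (a : ℝ) * G16 (Real.sqrt (2 + Real.sqrt 2)) j k
        - (b : ℝ) * G16 (Real.sqrt (2 + Real.sqrt 2)) i k
        + (c : ℝ) * G16 (Real.sqrt (2 + Real.sqrt 2)) i j = 0) :
    ∀ t : ℝ, t ≠ 0 → (a : ℝ) * G16 t j k - (b : ℝ) * G16 t i k + (c : ℝ) * G16 t i j = 0 :=
  stmt_18_general a b c i j k h
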